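/- arXiv:2504.07054 — 3 statements merged into one kernel-verified Lean document; each statement's English description precedes it below -/
import Mathlib

section
/- Rearranged weighted stress-energy identity: for u : ℝ² → N in W^{2,2} and τ > 0, −(1/(4τ)) ∫ r² |du|² e^{−r²/(4τ)} dV = ∫ ⟨𝒯̂_τ(u), x^j ∂_j u⟩ e^{−r²/(4τ)} dV, where 𝒯̂_τ(u) = 𝒯(u) − (x/(2τ)) ⨼ du. -/
open MeasureTheory

/-- Partial derivative in the `i`-th coordinate direction on ℝ². -/
noncomputable def pd {F : Type*} [NormedAddCommGroup F] [NormedSpace ℝ F]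
    (i : Fin 2) (f : EuclideanSpace ℝ (Fin 2) → F)
    (x : EuclideanSpace ℝ (Fin 2)) : F :=
  fderiv ℝ f x (EuclideanSpace.single i 1)

/-- Gaussian weight `e^{−r²/(4τ)}` on ℝ². -/
noncomputable def gw (τ : ℝ) (x : EuclideanSpace ℝ (Fin 2)) : ℝ :=
  Real.exp (-‖x‖ ^ 2 / (4 * τ))

/-- Pointwise energy density `|du|²`. -/
noncomputable def endens {E : Type*} [NormedAddCommGroup E] [InnerProductSpace ℝ E]
    (u : EuclideanSpace ℝ (Fin 2) → E) (x : EuclideanSpace ℝ (Fin 2)) : ℝ :=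
  ∑ i : Fin 2, ‖pd i u x‖ ^ 2

section Aux

open Filter Topology

local notation "V" => EuclideanSpace ℝ (Fin 2)
local notation "sgl" i => EuclideanSpace.single i (1:ℝ)

lemma gw_contDiff (τ : ℝ) : ContDiff ℝ (⊤ : ℕ∞) (gw τ) := by
  unfold gw
  exact (((contDiff_norm_sq ℝ).neg.div_const (4*τ)).exp)

lemma hasFDerivAt_gw {τ : ℝ} (hτ : τ ≠ 0) (x : EuclideanSpace ℝ (Fin 2)) :
    HasFDerivAt (gw τ) ((-(gw τ x) / (2*τ)) • innerSL ℝ x) x := by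
  have h1 : HasFDerivAt (fun y : EuclideanSpace ℝ (Fin 2) => ‖y‖^2) (2 • innerSL ℝ x) x :=
    (hasStrictFDerivAt_norm_sq x).hasFDerivAt
  have h2 := ((h1.neg).const_smul ((4*τ)⁻¹ : ℝ)).exp
  have hfun : (fun y : EuclideanSpace ℝ (Fin 2) => Real.exp ((4*τ)⁻¹ • (-‖y‖^2))) = gw τ := by
    funext y
    simp only [gw, smul_eq_mul]
    ring_nf
  simp only [Pi.smul_apply, Pi.neg_apply] at h2
  rw [hfun] at h2
  convert h2 using 1
  ext v
  simp only [ContinuousLinearMap.smul_apply, ContinuousLinearMap.neg_apply, smul_eq_mul,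
    ContinuousLinearMap.coe_smul', Pi.smul_apply, gw]
  field_simp
  ext v
  simp only [gw, ContinuousLinearMap.smul_apply, ContinuousLinearMap.neg_apply, smul_eq_mul,
    nsmul_eq_mul]
  ring_nf

lemma inner_single_right' (x : V) (i : Fin 2) :
    (inner ℝ x (EuclideanSpace.single i (1:ℝ)) : ℝ) = x i := by
  rw [EuclideanSpace.inner_single_right]
  simp

lemma coord_abs_le_norm (x : V) (j : Fin 2) : |x j| ≤ ‖x‖ := by
  have h := abs_real_inner_le_norm x (EuclideanSpace.single j (1:ℝ))
  rw [inner_single_right', EuclideanSpace.norm_single] at h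
  simpa using h

lemma norm_sq_eq' (x : V) : ‖x‖^2 = x 0 * x 0 + x 1 * x 1 := by
  rw [← real_inner_self_eq_norm_sq]
  simp only [PiLp.inner_apply, Fin.sum_univ_two, RCLike.inner_apply, conj_trivial]

lemma x_eq_sum (x : V) : x = ∑ j : Fin 2, x j • (EuclideanSpace.single j (1:ℝ)) := by
  ext j
  fin_cases j <;>
    simp [Fin.sum_univ_two, EuclideanSpace.single_apply]

lemma contDiff_coord (j : Fin 2) : ContDiff ℝ 1 (fun x : V => x j) := by
  have := (EuclideanSpace.proj (𝕜 := ℝ) (ι := Fin 2) j).contDiff (n := 1)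
  convert this using 1
  exact funext fun x => rfl

lemma fderiv_coord_apply (j : Fin 2) (x v : V) :
    fderiv ℝ (fun x : V => x j) x v = v j := by
  have h : HasFDerivAt (fun x : V => x j) (EuclideanSpace.proj (𝕜 := ℝ) (ι := Fin 2) j) x :=
    (EuclideanSpace.proj (𝕜 := ℝ) (ι := Fin 2) j).hasFDerivAt
  rw [h.fderiv]
  simp

lemma int_fderiv_eq_zero {f : V → ℝ}
    (hf : Differentiable ℝ f) (hfi : Integrable f) (v : V)
    (hf'i : Integrable (fun x => fderiv ℝ f x v)) :
    ∫ x, fderiv ℝ f x v = 0 := by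
  have h := integral_mul_fderiv_eq_neg_fderiv_mul_of_integrable
    (f := f) (g := fun _ => (1:ℝ)) (v := v) (μ := volume)
    (by simpa using hf'i) (by simp [fderiv_fun_const]) (by simpa using hfi)
    (fun x _ => hf x) (fun x _ => differentiableAt_const (1:ℝ))
  simp [fderiv_fun_const] at h
  linarith [h]

lemma integral_div_eq_zero (F : Fin 2 → V → ℝ) (hF : ∀ i, ContDiff ℝ 1 (F i))
    (hFi : ∀ i, Integrable (F i)) (g : V → ℝ) (hg : Integrable g)
    (hdivF : ∀ x, ∑ i : Fin 2, fderiv ℝ (F i) x (sgl i) = g x) :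
    ∫ x, g x = 0 := by
  set φ : ContDiffBump (0 : V) := ⟨1, 2, one_pos, one_lt_two⟩ with hφdef
  set χ : ℕ → V → ℝ := fun n x => φ ((n+1 : ℝ)⁻¹ • x) with hχ
  have hcpos : ∀ n : ℕ, ((n:ℝ)+1)⁻¹ ≠ 0 := by intro n; positivity
  have hc : ∀ n, ContDiff ℝ 1 (χ n) := by
    intro n
    exact (φ.contDiff (n := 1)).comp (contDiff_const_smul _)
  have hφdiff : Differentiable ℝ (⇑φ) := (φ.contDiff (n := 1)).differentiable (by simp)
  have hsupp : ∀ n, HasCompactSupport (χ n) := by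
    intro n
    have := φ.hasCompactSupport.comp_homeomorph
      (Homeomorph.smul (Units.mk0 ((n+1 : ℝ)⁻¹) (hcpos n)) (α := V))
    convert this using 1
    exact funext fun x => rfl
  obtain ⟨K, hK⟩ : ∃ K, ∀ y, ‖fderiv ℝ (⇑φ) y‖ ≤ K :=
    (φ.hasCompactSupport.fderiv (𝕜 := ℝ)).exists_bound_of_continuous
      ((φ.contDiff (n := 1)).continuous_fderiv (by simp))
  have hKnn : 0 ≤ K := le_trans (norm_nonneg _) (hK 0)
  have hfderivχ : ∀ n x, fderiv ℝ (χ n) x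
      = ((n+1 : ℝ)⁻¹) • fderiv ℝ (⇑φ) (((n:ℝ)+1)⁻¹ • x) := by
    intro n x
    have hL : HasFDerivAt (fun y : V => ((n:ℝ)+1)⁻¹ • y)
        (((n:ℝ)+1)⁻¹ • ContinuousLinearMap.id ℝ V) x :=
      by exact (ContinuousLinearMap.id ℝ V).hasFDerivAt.const_smul (((n:ℝ)+1)⁻¹)
    have hφd : HasFDerivAt (⇑φ) (fderiv ℝ (⇑φ) (((n:ℝ)+1)⁻¹ • x)) (((n:ℝ)+1)⁻¹ • x) :=
      (hφdiff _).hasFDerivAt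
    have h2' : HasFDerivAt (χ n)
        ((fderiv ℝ (⇑φ) (((n:ℝ)+1)⁻¹ • x)).comp (((n:ℝ)+1)⁻¹ • ContinuousLinearMap.id ℝ V)) x :=
      hφd.comp x hL
    rw [h2'.fderiv]
    ext v
    simp
  have hgradbd : ∀ n x (v : V), ‖v‖ ≤ 1 → |fderiv ℝ (χ n) x v| ≤ K := by
    intro n x v hv
    rw [hfderivχ]
    set D := fderiv ℝ (⇑φ) (((n:ℝ)+1)⁻¹ • x)
    have h1 : |D v| ≤ K := by
      have := D.le_opNorm v
      have := hK (((n:ℝ)+1)⁻¹ • x)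
      have := norm_nonneg D
      rw [Real.norm_eq_abs] at *
      nlinarith
    have h2 : |((n:ℝ)+1)⁻¹| ≤ 1 := by
      rw [abs_of_nonneg (by positivity)]
      rw [inv_le_one_iff₀]
      right; norm_num
    simp only [ContinuousLinearMap.smul_apply, smul_eq_mul, abs_mul]
    nlinarith [abs_nonneg (D v), abs_nonneg (((n:ℝ)+1)⁻¹)]
  -- eventual flatness
  have hflat : ∀ x : V, ∀ᶠ n : ℕ in atTop, χ n x = 1 ∧ fderiv ℝ (χ n) x = 0 := by
    intro x
    obtain ⟨N, hN⟩ := exists_nat_gt ‖x‖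
    filter_upwards [eventually_ge_atTop N] with n hn
    have hnx : ‖x‖ < (n:ℝ) + 1 := by
      have : (N:ℝ) ≤ n := by exact_mod_cast hn
      linarith
    have hone : ∀ y ∈ Metric.ball (0:V) ((n:ℝ)+1), χ n y = 1 := by
      intro y hy
      apply φ.one_of_mem_closedBall
      simp only [Metric.mem_ball, dist_zero_right] at hy
      simp only [Metric.mem_closedBall, dist_zero_right, norm_smul]
      rw [norm_inv, Real.norm_eq_abs, abs_of_nonneg (by positivity)]
      rw [inv_mul_le_iff₀ (by positivity)]
      linarith
    have hmem : x ∈ Metric.ball (0:V) ((n:ℝ)+1) := by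
      simp only [Metric.mem_ball, dist_zero_right]; exact hnx
    refine ⟨hone x hmem, ?_⟩
    have hev : χ n =ᶠ[nhds x] (fun _ => (1:ℝ)) := by
      filter_upwards [Metric.isOpen_ball.mem_nhds hmem] with y hy using hone y hy
    rw [hev.fderiv_eq, fderiv_fun_const]
    rfl
  -- per-n vanishing of integral of each divergence term of the cutoff product
  have hPfacts : ∀ (n : ℕ) (i : Fin 2),
      Integrable (fun x => fderiv ℝ (fun y => χ n y * F i y) x (sgl i)) ∧
      ∫ x, fderiv ℝ (fun y => χ n y * F i y) x (sgl i) = 0 := by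
    intro n i
    set P := fun y => χ n y * F i y with hP
    have hPc : ContDiff ℝ 1 P := (hc n).mul (hF i)
    have hdP : Differentiable ℝ P := hPc.differentiable (by simp)
    have hPsupp : HasCompactSupport P := (hsupp n).mul_right
    have hPint : Integrable P := hPc.continuous.integrable_of_hasCompactSupport hPsupp
    have hfc : Continuous (fderiv ℝ P) := hPc.continuous_fderiv (by simp)
    have hP'c : Continuous (fun x => fderiv ℝ P x (sgl i)) := hfc.clm_apply continuous_const
    have hP'supp : HasCompactSupport (fun x => fderiv ℝ P x (sgl i)) := by
      have := (hPsupp.fderiv (𝕜 := ℝ)).comp_left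
        (g := fun L : V →L[ℝ] ℝ => L (sgl i)) rfl
      exact this
    have hP'int : Integrable (fun x => fderiv ℝ P x (sgl i)) :=
      hP'c.integrable_of_hasCompactSupport hP'supp
    exact ⟨hP'int, int_fderiv_eq_zero hdP hPint _ hP'int⟩
  -- the per-n integral identity
  have hsum : ∀ n : ℕ, ∫ x, ((∑ i : Fin 2, fderiv ℝ (χ n) x (sgl i) * F i x) + χ n x * g x)
      = 0 := by
    intro n
    have h0 : ∫ x, ∑ i : Fin 2, fderiv ℝ (fun y => χ n y * F i y) x (sgl i) = 0 := by
      rw [integral_finset_sum _ (fun i _ => (hPfacts n i).1)]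
      simp only [(fun i => (hPfacts n i).2)]
      simp
    rw [← h0]
    congr 1
    funext x
    have hexp : ∀ i : Fin 2, fderiv ℝ (fun y => χ n y * F i y) x (sgl i)
        = χ n x * fderiv ℝ (F i) x (sgl i) + fderiv ℝ (χ n) x (sgl i) * F i x := by
      intro i
      rw [fderiv_fun_mul (((hc n).differentiable (by simp)) x) (((hF i).differentiable (by simp)) x)]
      simp [mul_comm]
    rw [Finset.sum_congr rfl (fun i _ => hexp i), Finset.sum_add_distrib]
    rw [← Finset.mul_sum, hdivF x]
    ring
  have hsgl_norm : ∀ i : Fin 2, ‖(EuclideanSpace.single i (1:ℝ) : V)‖ ≤ 1 := by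
    intro i
    rw [EuclideanSpace.norm_single]
    norm_num
  have hχcont : ∀ n, Continuous (χ n) := fun n => (hc n).continuous
  have hdχcont : ∀ (n : ℕ) (i : Fin 2), Continuous (fun x => fderiv ℝ (χ n) x (sgl i)) :=
    fun n i => ((hc n).continuous_fderiv (by simp)).clm_apply continuous_const
  have hq_int : ∀ n : ℕ,
      Integrable (fun x => ∑ i : Fin 2, fderiv ℝ (χ n) x (sgl i) * F i x) := by
    intro n
    apply integrable_finset_sum
    intro i _
    exact (hFi i).bdd_mul ((hdχcont n i).aestronglyMeasurable)
      (ae_of_all _ fun x => by simpa [Real.norm_eq_abs] using hgradbd n x _ (hsgl_norm i))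
  have hχg_int : ∀ n : ℕ, Integrable (fun x => χ n x * g x) := by
    intro n
    exact hg.bdd_mul (c := 1) ((hχcont n).aestronglyMeasurable)
      (ae_of_all _ fun x => by rw [Real.norm_eq_abs, abs_of_nonneg φ.nonneg]; exact φ.le_one)
  have hsplit : ∀ n : ℕ, (∫ x, ∑ i : Fin 2, fderiv ℝ (χ n) x (sgl i) * F i x)
      + ∫ x, χ n x * g x = 0 := by
    intro n
    rw [← integral_add (hq_int n) (hχg_int n)]
    exact hsum n
  -- limit of the boundary term
  have hbound_int : Integrable (fun x => ∑ i : Fin 2, K * |F i x|) :=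
    integrable_finset_sum _ (fun i _ => ((hFi i).abs.const_mul K))
  have h2 : Tendsto (fun n : ℕ => ∫ x, ∑ i : Fin 2, fderiv ℝ (χ n) x (sgl i) * F i x)
      atTop (𝓝 (∫ _x : V, (0:ℝ))) := by
    apply tendsto_integral_of_dominated_convergence _ ?_ hbound_int ?_ ?_
    · intro n
      exact ((hq_int n)).aestronglyMeasurable
    · intro n
      filter_upwards with x
      rw [Real.norm_eq_abs]
      refine (Finset.abs_sum_le_sum_abs _ _).trans ?_
      apply Finset.sum_le_sum
      intro i _
      rw [abs_mul]
      have h1 := hgradbd n x (sgl i) (hsgl_norm i)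
      have h2 := abs_nonneg (F i x)
      nlinarith [abs_nonneg (fderiv ℝ (χ n) x (sgl i))]
    · filter_upwards with x
      apply tendsto_const_nhds.congr'
      filter_upwards [hflat x] with n hn
      symm
      simp [hn.2]
  have h1 : Tendsto (fun n : ℕ => ∫ x, χ n x * g x) atTop (𝓝 (∫ x, g x)) := by
    apply tendsto_integral_of_dominated_convergence (fun x => |g x|) ?_ hg.abs ?_ ?_
    · intro n
      exact (hχg_int n).aestronglyMeasurable
    · intro n
      filter_upwards with x
      rw [Real.norm_eq_abs, abs_mul]
      have := abs_nonneg (g x)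
      have h1 : |χ n x| ≤ 1 := by
        rw [abs_of_nonneg φ.nonneg]; exact φ.le_one
      nlinarith
    · filter_upwards with x
      apply tendsto_const_nhds.congr'
      filter_upwards [hflat x] with n hn
      simp [hn.1]
  have := tendsto_nhds_unique (by simpa using (h2.add h1))
    (tendsto_const_nhds (x := (0:ℝ)) (f := atTop) |>.congr (fun n => (hsplit n).symm))
  simpa using this

end Aux

/-- rearranged weighted stress-energy identity: for a `W^{2,2}`
map `u : ℝ² → N` with tension field `T` (characterized by the stress-energy
divergence identity) and `τ > 0`,
`−(1/(4τ)) ∫ r²|du|² e^{−r²/(4τ)} dV = ∫ ⟪𝒯̂_τ(u), x ⨼ du⟫ e^{−r²/(4τ)} dV`,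
where `𝒯̂_τ(u) = 𝒯(u) − (x/(2τ)) ⨼ du`. -/
theorem rearranged_weighted_stress_energy_identity
    {E : Type*} [NormedAddCommGroup E] [InnerProductSpace ℝ E]
    (u : EuclideanSpace ℝ (Fin 2) → E) (hu : ContDiff ℝ 2 u)
    (T : EuclideanSpace ℝ (Fin 2) → E)
    (S : Fin 2 → Fin 2 → EuclideanSpace ℝ (Fin 2) → ℝ)
    (hS : ∀ i j x, S i j x =
      inner ℝ (pd i u x) (pd j u x) -
      (1 / 2) * (if i = j then (1 : ℝ) else 0) * endens u x)
    (hdiv : ∀ j x, ∑ i : Fin 2, pd i (S i j) x = (inner ℝ (T x) (pd j u x) : ℝ))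
    (τ : ℝ) (hτ : 0 < τ)
    (That : EuclideanSpace ℝ (Fin 2) → E)
    (hThat : ∀ x, That x = T x - (1 / (2 * τ)) • fderiv ℝ u x x)
    (hint₁ : Integrable (fun x => ‖x‖ ^ 2 * endens u x * gw τ x))
    (hint₂ : Integrable (fun x => (inner ℝ (That x) (fderiv ℝ u x x) : ℝ) * gw τ x)) :
    -(1 / (4 * τ)) * ∫ x, ‖x‖ ^ 2 * endens u x * gw τ x =
      ∫ x, (inner ℝ (That x) (fderiv ℝ u x x) : ℝ) * gw τ x := by
  classical
  have hτ' : τ ≠ 0 := ne_of_gt hτ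
  -- differentiability of the building blocks
  have hpdu : ∀ i : Fin 2, ContDiff ℝ 1 (pd i u) := by
    intro i
    have h := hu.fderiv_right (m := 1) (by norm_num)
    exact h.clm_apply contDiff_const
  have hend_c : ContDiff ℝ 1 (endens u) := by
    unfold endens
    exact ContDiff.sum (fun i _ => ContDiff.norm_sq ℝ (hpdu i))
  have hScont : ∀ i j, ContDiff ℝ 1 (S i j) := by
    intro i j
    have hSeq : S i j = fun x => (inner ℝ (pd i u x) (pd j u x) : ℝ) -
        (1/2) * (if i = j then (1:ℝ) else 0) * endens u x := funext (hS i j)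
    rw [hSeq]
    exact (ContDiff.inner ℝ (hpdu i) (hpdu j)).sub
      ((contDiff_const.mul contDiff_const).mul hend_c)
  -- the vector field
  set A : Fin 2 → (EuclideanSpace ℝ (Fin 2)) → ℝ :=
    fun i x => ∑ j : Fin 2, x j * S i j x with hA
  set Fv : Fin 2 → (EuclideanSpace ℝ (Fin 2)) → ℝ :=
    fun i x => A i x * gw τ x with hFdef
  have hAc : ∀ i, ContDiff ℝ 1 (A i) :=
    fun i => ContDiff.sum (fun j _ => (contDiff_coord j).mul (hScont i j))
  have hFc : ∀ i, ContDiff ℝ 1 (Fv i) :=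
    fun i => (hAc i).mul ((gw_contDiff τ).of_le (by simp))
  -- the divergence
  have hdivF : ∀ x, ∑ i : Fin 2, fderiv ℝ (Fv i) x (EuclideanSpace.single i 1) =
      (inner ℝ (That x) (fderiv ℝ u x x) : ℝ) * gw τ x
        + (1/(4*τ)) * (‖x‖^2 * endens u x * gw τ x) := by
    intro x
    have hgw' : ∀ i : Fin 2, fderiv ℝ (gw τ) x (EuclideanSpace.single i 1)
        = -(gw τ x)/(2*τ) * x i := by
      intro i
      rw [(hasFDerivAt_gw hτ' x).fderiv]
      simp only [ContinuousLinearMap.smul_apply, innerSL_apply_apply, smul_eq_mul]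
      rw [inner_single_right']
    have hterm : ∀ i j : Fin 2,
        fderiv ℝ (fun y : EuclideanSpace ℝ (Fin 2) => y j * S i j y) x
          (EuclideanSpace.single i 1)
        = x j * pd i (S i j) x + S i j x * (if i = j then (1:ℝ) else 0) := by
      intro i j
      rw [fderiv_fun_mul ((contDiff_coord j).differentiable (by simp) x)
        ((hScont i j).differentiable (by simp) x)]
      simp only [ContinuousLinearMap.add_apply, ContinuousLinearMap.smul_apply, smul_eq_mul]
      rw [fderiv_coord_apply, EuclideanSpace.single_apply]
      unfold pd
      by_cases h : i = j
      · simp [h]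
      · simp [h, Ne.symm h]
    have hAd : ∀ i, fderiv ℝ (A i) x (EuclideanSpace.single i 1)
        = ∑ j : Fin 2, (x j * pd i (S i j) x + S i j x * (if i = j then (1:ℝ) else 0)) := by
      intro i
      have hdsum := fderiv_fun_sum (u := Finset.univ)
        (A := fun j (y : EuclideanSpace ℝ (Fin 2)) => y j * S i j y) (x := x)
        (fun j _ => ((contDiff_coord j).mul (hScont i j)).differentiable (by simp) x)
      have : fderiv ℝ (A i) x = ∑ j : Fin 2,
          fderiv ℝ (fun y : EuclideanSpace ℝ (Fin 2) => y j * S i j y) x := by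
        rw [hA]; exact hdsum
      rw [this, ContinuousLinearMap.sum_apply]
      exact Finset.sum_congr rfl fun j _ => hterm i j
    have hFd : ∀ i, fderiv ℝ (Fv i) x (EuclideanSpace.single i 1)
        = A i x * (-(gw τ x)/(2*τ) * x i)
          + gw τ x * fderiv ℝ (A i) x (EuclideanSpace.single i 1) := by
      intro i
      rw [hFdef]
      rw [fderiv_fun_mul ((hAc i).differentiable (by simp) x)
        (((gw_contDiff τ).of_le (by simp) : ContDiff ℝ 1 (gw τ)).differentiable (by simp) x)]
      simp only [ContinuousLinearMap.add_apply, ContinuousLinearMap.smul_apply, smul_eq_mul]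
      rw [hgw']
    have hbasis : fderiv ℝ u x x = ∑ j : Fin 2, x j • pd j u x := by
      have h := congrArg (fderiv ℝ u x) (x_eq_sum x)
      rw [map_sum] at h
      simpa only [_root_.map_smul, pd] using h
    have hK1 : (inner ℝ (T x) (fderiv ℝ u x x) : ℝ)
        = ∑ j : Fin 2, x j * (∑ i : Fin 2, pd i (S i j) x) := by
      rw [hbasis, inner_sum]
      refine Finset.sum_congr rfl fun j _ => ?_
      rw [real_inner_smul_right, hdiv j x]
    have hK2 : (inner ℝ (fderiv ℝ u x x) (fderiv ℝ u x x) : ℝ)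
        = ∑ j : Fin 2, ∑ k : Fin 2, x j * x k * (inner ℝ (pd j u x) (pd k u x) : ℝ) := by
      rw [hbasis, sum_inner]
      refine Finset.sum_congr rfl fun j _ => ?_
      rw [real_inner_smul_left, inner_sum, Finset.mul_sum]
      refine Finset.sum_congr rfl fun k _ => ?_
      rw [real_inner_smul_right]
      ring
    have hThat' : (inner ℝ (That x) (fderiv ℝ u x x) : ℝ)
        = (inner ℝ (T x) (fderiv ℝ u x x) : ℝ)
          - (1/(2*τ)) * (inner ℝ (fderiv ℝ u x x) (fderiv ℝ u x x) : ℝ) := by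
      rw [hThat x, inner_sub_left, real_inner_smul_left]
    have hself0 : (inner ℝ (pd 0 u x) (pd 0 u x) : ℝ) = ‖pd 0 u x‖^2 :=
      real_inner_self_eq_norm_sq _
    have hself1 : (inner ℝ (pd 1 u x) (pd 1 u x) : ℝ) = ‖pd 1 u x‖^2 :=
      real_inner_self_eq_norm_sq _
    have hendx : endens u x = ‖pd 0 u x‖^2 + ‖pd 1 u x‖^2 := by
      unfold endens; rw [Fin.sum_univ_two]
    rw [Fin.sum_univ_two, hFd 0, hFd 1, hAd 0, hAd 1]
    rw [hThat', hK1, hK2]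
    simp only [Fin.sum_univ_two]
    have hA0 : A 0 x = x 0 * S 0 0 x + x 1 * S 0 1 x := by
      show (∑ j : Fin 2, x j * S 0 j x) = _
      rw [Fin.sum_univ_two]
    have hA1 : A 1 x = x 0 * S 1 0 x + x 1 * S 1 1 x := by
      show (∑ j : Fin 2, x j * S 1 j x) = _
      rw [Fin.sum_univ_two]
    rw [hA0, hA1, hS 0 0 x, hS 0 1 x, hS 1 0 x, hS 1 1 x, norm_sq_eq' x, hendx,
      hself0, hself1]
    norm_num
    field_simp
    ring
  -- integrability
  have hend_nonneg : ∀ x, 0 ≤ endens u x :=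
    fun x => Finset.sum_nonneg (fun i _ => sq_nonneg _)
  have hgw_pos : ∀ x : EuclideanSpace ℝ (Fin 2), 0 < gw τ x := fun x => Real.exp_pos _
  have hcontE : Continuous (fun x => endens u x * gw τ x) :=
    hend_c.continuous.mul (gw_contDiff τ).continuous
  have h_end : Integrable (fun x => endens u x * gw τ x) := by
    have h1 : IntegrableOn (fun x => endens u x * gw τ x)
        (Metric.closedBall (0 : EuclideanSpace ℝ (Fin 2)) 1) :=
      hcontE.continuousOn.integrableOn_compact (isCompact_closedBall _ _)
    have h2 : IntegrableOn (fun x => endens u x * gw τ x)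
        (Metric.closedBall (0 : EuclideanSpace ℝ (Fin 2)) 1)ᶜ := by
      refine Integrable.mono' hint₁.integrableOn hcontE.aestronglyMeasurable.restrict ?_
      rw [ae_restrict_iff' measurableSet_closedBall.compl]
      filter_upwards with x hx
      simp only [Set.mem_compl_iff, Metric.mem_closedBall, dist_zero_right, not_le] at hx
      rw [Real.norm_eq_abs, abs_of_nonneg (mul_nonneg (hend_nonneg x) (hgw_pos x).le)]
      have h4 : (1:ℝ) ≤ ‖x‖^2 := by nlinarith [norm_nonneg x]
      nlinarith [mul_le_mul_of_nonneg_right h4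
        (mul_nonneg (hend_nonneg x) (hgw_pos x).le)]
    have h3 := h1.union h2
    rw [Set.union_compl_self] at h3
    exact integrableOn_univ.mp h3
  have hSbd : ∀ i j x, |S i j x| ≤ (3/2) * endens u x := by
    intro i j x
    have ha := abs_real_inner_le_norm (pd i u x) (pd j u x)
    have hii : ‖pd i u x‖^2 ≤ endens u x :=
      Finset.single_le_sum (f := fun k => ‖pd k u x‖^2) (fun k _ => sq_nonneg _)
        (Finset.mem_univ i)
    have hjj : ‖pd j u x‖^2 ≤ endens u x :=
      Finset.single_le_sum (f := fun k => ‖pd k u x‖^2) (fun k _ => sq_nonneg _)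
        (Finset.mem_univ j)
    have h0 := hend_nonneg x
    have hip1 := le_abs_self (inner ℝ (pd i u x) (pd j u x) : ℝ)
    have hip2 := neg_abs_le (inner ℝ (pd i u x) (pd j u x) : ℝ)
    rw [hS i j x]
    by_cases hij : i = j
    · rw [if_pos hij, abs_le]
      constructor <;>
        nlinarith [sq_nonneg (‖pd i u x‖ - ‖pd j u x‖), norm_nonneg (pd i u x),
          norm_nonneg (pd j u x)]
    · rw [if_neg hij, abs_le]
      constructor <;>
        nlinarith [sq_nonneg (‖pd i u x‖ - ‖pd j u x‖), norm_nonneg (pd i u x),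
          norm_nonneg (pd j u x)]
  have hFi : ∀ i, Integrable (Fv i) := by
    intro i
    have hmaj : Integrable (fun x => 3 * (endens u x * gw τ x)
        + 3 * (‖x‖^2 * endens u x * gw τ x)) :=
      (h_end.const_mul 3).add (hint₁.const_mul 3)
    refine Integrable.mono' hmaj (hFc i).continuous.aestronglyMeasurable ?_
    filter_upwards with x
    have e0 := hend_nonneg x
    have w0 := (hgw_pos x).le
    have hS0 := hSbd i 0 x
    have hS1 := hSbd i 1 x
    have hx0 := coord_abs_le_norm x 0
    have hx1 := coord_abs_le_norm x 1
    have hFveq : Fv i x = (x 0 * S i 0 x + x 1 * S i 1 x) * gw τ x := by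
      show (∑ j : Fin 2, x j * S i j x) * gw τ x = _
      rw [Fin.sum_univ_two]
    rw [Real.norm_eq_abs, hFveq, abs_mul, abs_of_nonneg w0]
    have h2 : |x 0 * S i 0 x + x 1 * S i 1 x| ≤ 3 * ‖x‖ * endens u x := by
      refine (abs_add_le _ _).trans ?_
      rw [abs_mul, abs_mul]
      nlinarith [abs_nonneg (x 0), abs_nonneg (x 1), norm_nonneg x,
        abs_nonneg (S i 0 x), abs_nonneg (S i 1 x)]
    nlinarith [norm_nonneg x, sq_nonneg (‖x‖ - 1), mul_nonneg e0 w0,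
      mul_le_mul_of_nonneg_right h2 w0,
      mul_nonneg (mul_nonneg (mul_nonneg (norm_nonneg x) (norm_nonneg x)) e0) w0]
  have hgint : Integrable (fun x => (inner ℝ (That x) (fderiv ℝ u x x) : ℝ) * gw τ x
      + (1/(4*τ)) * (‖x‖^2 * endens u x * gw τ x)) :=
    hint₂.add (hint₁.const_mul _)
  have h0 := integral_div_eq_zero Fv hFc hFi _ hgint hdivF
  rw [integral_add hint₂ (hint₁.const_mul _), integral_const_mul] at h0
  linarith
end

section
/- ODE comparison for the Łojasiewicz decay: let K ≥ 1, 1 < α < 2, ε > 0, and let φ : [0, S] → ℝ be differentiable with φ'(s) + (2/K²)|φ(s)|^{2/α} ≤ 0 and φ(0) ≤ ε. Define ϕ(s) = (ε^{−(2−α)/α} + (2(2−α)/(K²α)) s)^{−α/(2−α)}. Then φ(s) ≤ ϕ(s) for all s ∈ [0, S]. -/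
/-!
The bound `ϕ` is the explicit solution of `y' = -κ y ^ p` with `κ = 2 / K²`, `p = 2 / α > 1` and
`y 0 = ε`. Since `y ↦ -κ |y| ^ p` is antitone on `[0, ∞)` and `ϕ > 0`, the function
`ϕ + δ (1 + s)` is a strict supersolution for every `δ > 0`; a subsolution starting below it can
therefore never touch it, and letting `δ → 0` gives `φ ≤ ϕ`.
-/

open Set

theorem image_le_of_subsolution_of_supersolution {f f' ϕ ϕ' G : ℝ → ℝ} {a b m : ℝ}
    (hf : ContinuousOn f (Icc a b)) (hf' : ∀ x ∈ Ico a b, HasDerivWithinAt f (f' x) (Ici x) x)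
    (hϕ : ContinuousOn ϕ (Icc a b)) (hϕ' : ∀ x ∈ Ico a b, HasDerivWithinAt ϕ (ϕ' x) (Ici x) x)
    (ha : f a ≤ ϕ a) (hG : AntitoneOn G (Ici m)) (hϕm : ∀ x ∈ Ico a b, m ≤ ϕ x)
    (hf_sub : ∀ x ∈ Ico a b, f' x ≤ G (f x)) (hϕ_super : ∀ x ∈ Ico a b, G (ϕ x) ≤ ϕ' x) :
    ∀ ⦃x⦄, x ∈ Icc a b → f x ≤ ϕ x := by
  have perturbed : ∀ δ > 0, ∀ ⦃x⦄, x ∈ Icc a b → f x ≤ ϕ x + δ * (1 + (x - a)) := by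
    intro δ hδ
    have hB : ContinuousOn (fun y => ϕ y + δ * (1 + (y - a))) (Icc a b) := by fun_prop
    have hB' (x) (hx : x ∈ Ico a b) :
        HasDerivWithinAt (fun y => ϕ y + δ * (1 + (y - a))) (ϕ' x + δ) (Ici x) x :=
      ((hϕ' x hx).add ((((hasDerivWithinAt_id x _).sub_const a).const_add 1).const_mul δ)
        ).congr_deriv (by ring)
    have hstart : f a ≤ ϕ a + δ * (1 + (a - a)) := by
      simp only [sub_self, add_zero, mul_one]; linarith
    refine image_le_of_deriv_right_lt_deriv_boundary' hf hf' hstart hB hB' fun x hx hfx => ?_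
    have hϕB : ϕ x ≤ f x := by rw [hfx]; nlinarith [hx.1]
    calc f' x ≤ G (f x) := hf_sub x hx
      _ ≤ G (ϕ x) := hG (hϕm x hx) ((hϕm x hx).trans hϕB) hϕB
      _ ≤ ϕ' x := hϕ_super x hx
      _ < ϕ' x + δ := lt_add_of_pos_right _ hδ
  intro x hx
  have hx₀ : 0 < 1 + (x - a) := by linarith [hx.1]
  refine le_of_forall_pos_le_add fun ε hε => ?_
  simpa [div_mul_cancel₀ _ hx₀.ne'] using perturbed (ε / (1 + (x - a))) (by positivity) hx

/-- The solution of `y' = -κ y ^ p`, `y 0 = ε`, for `p > 1`. -/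
noncomputable def powerDecay (κ p ε s : ℝ) : ℝ :=
  (ε ^ (1 - p) + κ * (p - 1) * s) ^ (1 - p)⁻¹

section powerDecay

variable {κ p ε s : ℝ}

theorem powerDecay_zero (hε : 0 ≤ ε) (hp : p ≠ 1) : powerDecay κ p ε 0 = ε := by
  have hp' : 1 - p ≠ 0 := sub_ne_zero.mpr hp.symm
  rw [powerDecay, mul_zero, add_zero, ← Real.rpow_mul hε, mul_inv_cancel₀ hp', Real.rpow_one]

theorem powerDecay_base_pos (hε : 0 < ε) (hp : 1 ≤ p) (hκ : 0 ≤ κ) (hs : 0 ≤ s) :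
    0 < ε ^ (1 - p) + κ * (p - 1) * s := by
  have hlin : 0 ≤ κ * (p - 1) * s := mul_nonneg (mul_nonneg hκ (by linarith)) hs
  linarith [Real.rpow_pos_of_pos hε (1 - p)]

theorem powerDecay_pos (hε : 0 < ε) (hp : 1 ≤ p) (hκ : 0 ≤ κ) (hs : 0 ≤ s) :
    0 < powerDecay κ p ε s :=
  Real.rpow_pos_of_pos (powerDecay_base_pos hε hp hκ hs) _

theorem hasDerivAt_powerDecay (hε : 0 < ε) (hp : 1 < p) (hκ : 0 ≤ κ) (hs : 0 ≤ s) :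
    HasDerivAt (powerDecay κ p ε) (-κ * powerDecay κ p ε s ^ p) s := by
  have hbase := powerDecay_base_pos hε hp.le hκ hs
  have hp' : 1 - p ≠ 0 := by linarith
  have hlin : HasDerivAt (fun t => ε ^ (1 - p) + κ * (p - 1) * t) (κ * (p - 1)) s := by
    simpa using ((hasDerivAt_id s).const_mul (κ * (p - 1))).const_add (ε ^ (1 - p))
  refine ((Real.hasDerivAt_rpow_const (Or.inl hbase.ne')).comp s hlin).congr_deriv ?_
  rw [powerDecay, ← Real.rpow_mul hbase.le, show (1 - p)⁻¹ * p = (1 - p)⁻¹ - 1 by field_simp; ring]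
  field_simp
  ring

end powerDecay

theorem lojasiewicz_ode_comparison_general
    (K α ε S : ℝ) (hα₁ : 1 < α) (hα₂ : α < 2) (hε : 0 < ε)
    (φ φ' : ℝ → ℝ)
    (hφ : ∀ s ∈ Set.Icc 0 S, HasDerivAt φ (φ' s) s)
    (hODE : ∀ s ∈ Set.Icc 0 S, φ' s + (2 / K ^ 2) * |φ s| ^ (2 / α) ≤ 0)
    (h0 : φ 0 ≤ ε) :
    ∀ s ∈ Set.Icc 0 S,
      φ s ≤ (ε ^ (-(2 - α) / α) + (2 * (2 - α) / (K ^ 2 * α)) * s)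
        ^ (-α / (2 - α)) := by
  intro s hs
  have hα : α ≠ 0 := by linarith
  have hp : 1 < 2 / α := by rw [lt_div_iff₀ (by linarith)]; linarith
  have hκ : 0 ≤ 2 / K ^ 2 := by positivity
  have hϕ (x) (hx : x ∈ Icc 0 S) := hasDerivAt_powerDecay (κ := 2 / K ^ 2) hε hp hκ hx.1
  have hG : AntitoneOn (fun y => -(2 / K ^ 2) * |y| ^ (2 / α)) (Ici 0) := fun x hx y hy hxy => by
    simp only [abs_of_nonneg (mem_Ici.mp hx), abs_of_nonneg (mem_Ici.mp hy)]
    exact mul_le_mul_of_nonpos_left (Real.rpow_le_rpow hx hxy (by linarith)) (by linarith)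
  have hcmp := image_le_of_subsolution_of_supersolution
    (fun x hx => (hφ x hx).continuousAt.continuousWithinAt)
    (fun x hx => (hφ x (Ico_subset_Icc_self hx)).hasDerivWithinAt)
    (fun x hx => (hϕ x hx).continuousAt.continuousWithinAt)
    (fun x hx => (hϕ x (Ico_subset_Icc_self hx)).hasDerivWithinAt)
    (by rwa [powerDecay_zero hε.le hp.ne']) hG (fun x hx => (powerDecay_pos hε hp.le hκ hx.1).le)
    (fun x hx => by linarith [hODE x (Ico_subset_Icc_self hx)])
    (fun x hx => by rw [abs_of_pos (powerDecay_pos hε hp.le hκ hx.1)]) hs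
  have hexp : 1 - 2 / α = -(2 - α) / α := by field_simp; ring
  have hrate : 2 / K ^ 2 * (2 / α - 1) = 2 * (2 - α) / (K ^ 2 * α) := by
    rw [div_sub_one hα]; ring
  rwa [powerDecay, hexp, hrate, inv_div, div_neg, ← neg_div] at hcmp

/-- ODE comparison for the Łojasiewicz decay: let `K ≥ 1`,
`1 < α < 2`, `ε > 0`, and let `φ : [0,S] → ℝ` be differentiable with
`φ' + (2/K²)|φ|^{2/α} ≤ 0` and `φ(0) ≤ ε`. Then `φ(s) ≤ ϕ(s)` on `[0,S]`, where
`ϕ(s) = (ε^{−(2−α)/α} + (2(2−α)/(K²α)) s)^{−α/(2−α)}`. -/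
theorem lojasiewicz_ode_comparison
    (K α ε S : ℝ) (hK : 1 ≤ K) (hα₁ : 1 < α) (hα₂ : α < 2) (hε : 0 < ε)
    (hS : 0 ≤ S) (φ φ' : ℝ → ℝ)
    (hφ : ∀ s ∈ Set.Icc 0 S, HasDerivAt φ (φ' s) s)
    (hODE : ∀ s ∈ Set.Icc 0 S, φ' s + (2 / K ^ 2) * |φ s| ^ (2 / α) ≤ 0)
    (h0 : φ 0 ≤ ε) :
    ∀ s ∈ Set.Icc 0 S,
      φ s ≤ (ε ^ (-(2 - α) / α) + (2 * (2 - α) / (K ^ 2 * α)) * s)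
        ^ (-α / (2 - α)) :=
  lojasiewicz_ode_comparison_general K α ε S hα₁ hα₂ hε φ φ' hφ hODE h0
end

section
/- Two-sided barrier from Łojasiewicz ODE: under the hypotheses of the previous comparison, suppose additionally that φ(S) ≥ −ε. Then for all s ∈ [0, S], −ϕ(S − s) ≤ φ(s) ≤ ϕ(s), where ϕ(s) = (ε^{−(2−α)/α} + (2(2−α)/(K²α)) s)^{−α/(2−α)}. -/
/-!
For `p > 1` and `k ≥ 0`, a positive solution of `ψ' ≤ -k ψ^p` makes `ψ^(1-p) - (p-1) k t`
nondecreasing, which inverts to `ψ(t) ≤ ϕ(t) := (ε^(1-p) + (p-1) k t)^(1/(1-p))` once `ψ(0) ≤ ε`.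
Since `φ' ≤ -k|φ|^p ≤ 0`, `φ` decreases, so it is positive on `[0, s]` whenever `φ(s) > 0`; this
gives the upper bound, and the lower bound is the upper bound for `t ↦ -φ(S - t)`, which satisfies
the same differential inequality. With `p = 2/α` and `k = 2/K²` this is the stated barrier.
-/

open Set

lemma monotoneOn_of_forall_hasDerivAt_nonneg {D : Set ℝ} (hD : Convex ℝ D) {f f' : ℝ → ℝ}
    (hf : ∀ x ∈ D, HasDerivAt f (f' x) x) (hf'₀ : ∀ x ∈ D, 0 ≤ f' x) : MonotoneOn f D :=
  monotoneOn_of_hasDerivWithinAt_nonneg hD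
    (fun x hx ↦ (hf x hx).continuousAt.continuousWithinAt)
    (fun x hx ↦ (hf x (interior_subset hx)).hasDerivWithinAt)
    (fun x hx ↦ hf'₀ x (interior_subset hx))

lemma antitoneOn_of_forall_hasDerivAt_nonpos {D : Set ℝ} (hD : Convex ℝ D) {f f' : ℝ → ℝ}
    (hf : ∀ x ∈ D, HasDerivAt f (f' x) x) (hf'₀ : ∀ x ∈ D, f' x ≤ 0) : AntitoneOn f D :=
  antitoneOn_of_hasDerivWithinAt_nonpos hD
    (fun x hx ↦ (hf x hx).continuousAt.continuousWithinAt)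
    (fun x hx ↦ (hf x (interior_subset hx)).hasDerivWithinAt)
    (fun x hx ↦ hf'₀ x (interior_subset hx))

/-- The explicit solution of `ϕ' = -k ϕ^p`, `ϕ(0) = ε`. -/
noncomputable def lojasiewiczBarrier (k p ε t : ℝ) : ℝ :=
  (ε ^ (1 - p) + (p - 1) * k * t) ^ (1 / (1 - p))

lemma lojasiewiczBarrier_nonneg {k p ε t : ℝ} (hk : 0 ≤ k) (hp : 1 < p) (hε : 0 < ε)
    (ht : 0 ≤ t) : 0 ≤ lojasiewiczBarrier k p ε t := by
  have : 0 ≤ (p - 1) * k * t := by have := sub_pos.2 hp; positivity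
  exact Real.rpow_nonneg (by positivity) _

lemma monotoneOn_rpow_one_sub_sub_mul {k p : ℝ} (hp : 1 ≤ p) {ψ ψ' : ℝ → ℝ} {D : Set ℝ}
    (hD : Convex ℝ D) (hψ : ∀ t ∈ D, HasDerivAt ψ (ψ' t) t) (hpos : ∀ t ∈ D, 0 < ψ t)
    (hODE : ∀ t ∈ D, ψ' t ≤ -k * ψ t ^ p) :
    MonotoneOn (fun t ↦ ψ t ^ (1 - p) - (p - 1) * k * t) D := by
  refine monotoneOn_of_forall_hasDerivAt_nonneg hD
    (fun t ht ↦ ((hψ t ht).rpow_const (Or.inl (hpos t ht).ne')).sub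
      ((hasDerivAt_id t).const_mul ((p - 1) * k))) fun t ht ↦ ?_
  have hψt := hpos t ht
  have hcancel : ψ t ^ p * ψ t ^ (1 - p - 1) = 1 := by
    rw [← Real.rpow_add hψt, show p + (1 - p - 1) = 0 by ring, Real.rpow_zero]
  have hfactor : (1 - p) * ψ t ^ (1 - p - 1) ≤ 0 :=
    mul_nonpos_of_nonpos_of_nonneg (by linarith) (by positivity)
  have hcomparison := mul_le_mul_of_nonpos_right (hODE t ht) hfactor
  have hrhs : -k * ψ t ^ p * ((1 - p) * ψ t ^ (1 - p - 1)) = (p - 1) * k := by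
    linear_combination (k * (p - 1)) * hcancel
  linarith

lemma le_lojasiewiczBarrier_of_pos {k p ε s : ℝ} (hk : 0 ≤ k) (hp : 1 < p) (hε : 0 < ε)
    (hs : 0 ≤ s) {ψ ψ' : ℝ → ℝ} (hψ : ∀ t ∈ Icc 0 s, HasDerivAt ψ (ψ' t) t)
    (hpos : ∀ t ∈ Icc 0 s, 0 < ψ t) (hODE : ∀ t ∈ Icc 0 s, ψ' t ≤ -k * ψ t ^ p)
    (h0 : ψ 0 ≤ ε) : ψ s ≤ lojasiewiczBarrier k p ε s := by
  have h0s : (0 : ℝ) ∈ Icc 0 s := left_mem_Icc.2 hs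
  have hss : s ∈ Icc 0 s := right_mem_Icc.2 hs
  have hmono := monotoneOn_rpow_one_sub_sub_mul hp.le (convex_Icc 0 s) hψ hpos hODE h0s hss hs
  have hstart : ε ^ (1 - p) ≤ ψ 0 ^ (1 - p) :=
    Real.rpow_le_rpow_of_nonpos (hpos 0 h0s) h0 (by linarith)
  have hbase : ε ^ (1 - p) + (p - 1) * k * s ≤ ψ s ^ (1 - p) := by
    simp only [mul_zero, sub_zero] at hmono
    linarith
  have hbase_pos : 0 < ε ^ (1 - p) + (p - 1) * k * s := by
    have : 0 ≤ (p - 1) * k * s := by have := sub_pos.2 hp; positivity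
    have := Real.rpow_pos_of_pos hε (1 - p)
    linarith
  calc ψ s = (ψ s ^ (1 - p)) ^ (1 / (1 - p)) := by
        rw [← Real.rpow_mul (hpos s hss).le, mul_one_div_cancel (by linarith), Real.rpow_one]
    _ ≤ lojasiewiczBarrier k p ε s :=
        Real.rpow_le_rpow_of_nonpos hbase_pos hbase (by rw [one_div_nonpos]; linarith)

section

variable {k p ε S : ℝ} {φ φ' : ℝ → ℝ}

lemma le_lojasiewiczBarrier (hk : 0 ≤ k) (hp : 1 < p) (hε : 0 < ε)
    (hφ : ∀ s ∈ Icc 0 S, HasDerivAt φ (φ' s) s)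
    (hODE : ∀ s ∈ Icc 0 S, φ' s + k * |φ s| ^ p ≤ 0) (h0 : φ 0 ≤ ε) :
    ∀ s ∈ Icc 0 S, φ s ≤ lojasiewiczBarrier k p ε s := by
  intro s hs
  rcases le_or_gt (φ s) 0 with hφs | hφs
  · exact hφs.trans (lojasiewiczBarrier_nonneg hk hp hε hs.1)
  have hsub : Icc 0 s ⊆ Icc 0 S := Icc_subset_Icc_right hs.2
  have hanti : AntitoneOn φ (Icc 0 S) := antitoneOn_of_forall_hasDerivAt_nonpos (convex_Icc 0 S)
    hφ fun t ht ↦ by linarith [hODE t ht, show 0 ≤ k * |φ t| ^ p by positivity]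
  have hpos : ∀ t ∈ Icc 0 s, 0 < φ t := fun t ht ↦ hφs.trans_le (hanti (hsub ht) hs ht.2)
  refine le_lojasiewiczBarrier_of_pos hk hp hε hs.1 (fun t ht ↦ hφ t (hsub ht)) hpos
    (fun t ht ↦ ?_) h0
  have hODEt := hODE t (hsub ht)
  rw [abs_of_pos (hpos t ht)] at hODEt
  linarith

lemma neg_lojasiewiczBarrier_le (hk : 0 ≤ k) (hp : 1 < p) (hε : 0 < ε)
    (hφ : ∀ s ∈ Icc 0 S, HasDerivAt φ (φ' s) s)
    (hODE : ∀ s ∈ Icc 0 S, φ' s + k * |φ s| ^ p ≤ 0) (hS : -ε ≤ φ S) :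
    ∀ s ∈ Icc 0 S, -lojasiewiczBarrier k p ε (S - s) ≤ φ s := by
  have hreflect : ∀ {t}, t ∈ Icc 0 S → S - t ∈ Icc 0 S :=
    fun ht ↦ ⟨by linarith [ht.2], by linarith [ht.1]⟩
  have hbound := le_lojasiewiczBarrier (φ := fun t ↦ -φ (S - t)) (φ' := fun t ↦ φ' (S - t))
    hk hp hε
    (fun t ht ↦ (((hφ _ (hreflect ht)).comp t ((hasDerivAt_id' t).const_sub S)).neg).congr_deriv
      (by ring))
    (fun t ht ↦ by simpa only [abs_neg] using hODE _ (hreflect ht))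
    (by simpa using neg_le.1 hS)
  intro s hs
  have hboundS := hbound (S - s) (hreflect hs)
  rw [sub_sub_cancel] at hboundS
  linarith

end

theorem lojasiewicz_two_sided_barrier_general
    (K α ε S : ℝ) (hα₁ : 1 < α) (hα₂ : α < 2) (hε : 0 < ε)
    (φ φ' : ℝ → ℝ)
    (hφ : ∀ s ∈ Set.Icc 0 S, HasDerivAt φ (φ' s) s)
    (hODE : ∀ s ∈ Set.Icc 0 S, φ' s + (2 / K ^ 2) * |φ s| ^ (2 / α) ≤ 0)
    (h0 : φ 0 ≤ ε) (hSlow : φ S ≥ -ε) :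
    ∀ s ∈ Set.Icc 0 S,
      -((ε ^ (-(2 - α) / α) + (2 * (2 - α) / (K ^ 2 * α)) * (S - s))
          ^ (-α / (2 - α))) ≤ φ s ∧
      φ s ≤ (ε ^ (-(2 - α) / α) + (2 * (2 - α) / (K ^ 2 * α)) * s)
        ^ (-α / (2 - α)) := by
  have hα₀ : α ≠ 0 := (by linarith : (0 : ℝ) < α).ne'
  have hp : 1 < 2 / α := by rw [lt_div_iff₀ (by linarith)]; linarith
  have hk : 0 ≤ 2 / K ^ 2 := by positivity
  have hϕ (t : ℝ) : lojasiewiczBarrier (2 / K ^ 2) (2 / α) ε t =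
      (ε ^ (-(2 - α) / α) + (2 * (2 - α) / (K ^ 2 * α)) * t) ^ (-α / (2 - α)) := by
    have hexp : 1 - 2 / α = -(2 - α) / α := by field_simp; ring
    have hrate : (2 / α - 1) * (2 / K ^ 2) = 2 * (2 - α) / (K ^ 2 * α) := by field_simp
    rw [lojasiewiczBarrier, hexp, hrate, one_div_div, div_neg, ← neg_div]
  intro s hs
  rw [← hϕ, ← hϕ]
  exact ⟨neg_lojasiewiczBarrier_le hk hp hε hφ hODE hSlow s hs,
    le_lojasiewiczBarrier hk hp hε hφ hODE h0 s hs⟩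

/-- two-sided barrier from the Łojasiewicz ODE: let `K ≥ 1`,
`1 < α < 2`, `ε > 0`, `φ : [0,S] → ℝ` differentiable with
`φ' + (2/K²)|φ|^{2/α} ≤ 0`, `φ(0) ≤ ε` and additionally `φ(S) ≥ −ε`. Then
`−ϕ(S − s) ≤ φ(s) ≤ ϕ(s)` on `[0,S]`, where
`ϕ(s) = (ε^{−(2−α)/α} + (2(2−α)/(K²α)) s)^{−α/(2−α)}`. -/
theorem lojasiewicz_two_sided_barrier
    (K α ε S : ℝ) (hK : 1 ≤ K) (hα₁ : 1 < α) (hα₂ : α < 2) (hε : 0 < ε)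
    (hS : 0 ≤ S) (φ φ' : ℝ → ℝ)
    (hφ : ∀ s ∈ Set.Icc 0 S, HasDerivAt φ (φ' s) s)
    (hODE : ∀ s ∈ Set.Icc 0 S, φ' s + (2 / K ^ 2) * |φ s| ^ (2 / α) ≤ 0)
    (h0 : φ 0 ≤ ε) (hSlow : φ S ≥ -ε) :
    ∀ s ∈ Set.Icc 0 S,
      -((ε ^ (-(2 - α) / α) + (2 * (2 - α) / (K ^ 2 * α)) * (S - s))
          ^ (-α / (2 - α))) ≤ φ s ∧
      φ s ≤ (ε ^ (-(2 - α) / α) + (2 * (2 - α) / (K ^ 2 * α)) * s)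
        ^ (-α / (2 - α)) :=
  lojasiewicz_two_sided_barrier_general K α ε S hα₁ hα₂ hε φ φ' hφ hODE h0 hSlow
end
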